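/- L^∞ dispersive bound for the time-translated frequency-localized Schrödinger kernel on R^3 × T: let K_N(x,y,t) = [∫_{R^3} (η¹_{≤N}(ξ_1) η¹_{≤N}(ξ_2) η¹_{≤N}(ξ_3))² e^{i(x·ξ + t|ξ|²)} dξ] · [Σ_{k∈Z} (η¹_{≤N}(k))² e^{i(yk + tk²)}] and K_{N,γ}(x,y,t) = K_N(x,y, 2πγ + t). Then for |γ| ≥ 3 and |t| ≤ 2π one has ‖K_{N,γ}‖_{L^∞_{x,y,t}} ≲ |γ|^{−3/2} N, and moreover ‖F_{x,y,t} K_{N,γ}‖_{L^∞_{ξ,k,τ}} ≲ 1. -/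

import Mathlib

open MeasureTheory Filter Topology Set
open scoped ENNReal BigOperators Classical

noncomputable section

instance : Fact (0 < 2 * Real.pi) := ⟨by positivity⟩

/-- The waveguide manifold `ℝ^m × 𝕋` with `𝕋 = ℝ/(2πℤ)`. -/
abbrev WG (m : ℕ) := (Fin m → ℝ) × AddCircle (2 * Real.pi)

/-- Euclidean length of a vector of `Fin d → ℝ`. -/
def rnorm {d : ℕ} (x : Fin d → ℝ) : ℝ := Real.sqrt (∑ i, x i ^ 2)

/-- Fourier transform on the waveguide: Fourier integral in `x ∈ ℝ^m`,
Fourier coefficient in `y ∈ 𝕋`; frequency variable `(ξ, k) ∈ ℝ^m × ℤ`. -/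
def wFT {m : ℕ} (f : WG m → ℂ) (ξ : Fin m → ℝ) (k : ℤ) : ℂ :=
  ∫ x : Fin m → ℝ,
    Complex.exp (-Complex.I * ((∑ i, ξ i * x i : ℝ) : ℂ)) * fourierCoeff (fun y => f (x, y)) k

/-- Fourier multiplier operator on the waveguide with symbol `sym`. -/
def fmul {m : ℕ} (sym : (Fin m → ℝ) → ℤ → ℂ) (f : WG m → ℂ) : WG m → ℂ :=
  fun p => (((2 * Real.pi) ^ m : ℝ)⁻¹ : ℂ) * ∑' k : ℤ, ∫ ξ : Fin m → ℝ,
    sym ξ k * wFT f ξ k * Complex.exp (Complex.I * ((∑ i, ξ i * p.1 i : ℝ) : ℂ)) * fourier k p.2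

/-- The linear Schrödinger propagator `e^{itΔ}` on the waveguide `ℝ^m × 𝕋`,
i.e. the Fourier multiplier with symbol `e^{-it(|ξ|² + k²)}`. -/
def sprop (m : ℕ) (t : ℝ) (f : WG m → ℂ) : WG m → ℂ :=
  fmul (fun ξ k =>
    Complex.exp (-Complex.I * (t : ℂ) * (((∑ i, ξ i ^ 2) + (k : ℝ) ^ 2 : ℝ) : ℂ))) f

/-- A fixed radial smooth bump function, equal to `1` on the unit ball
and vanishing outside the ball of radius `2`. -/
structure IsLPBump {d : ℕ} (φ : (Fin d → ℝ) → ℝ) : Prop where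
  smooth : ContDiff ℝ (⊤ : ℕ∞) φ
  radial : ∀ x y : Fin d → ℝ, rnorm x = rnorm y → φ x = φ y
  eq_one : ∀ x, rnorm x ≤ 1 → φ x = 1
  eq_zero : ∀ x, 2 ≤ rnorm x → φ x = 0

/-- Littlewood–Paley projector `P_{≤N}` on the waveguide, built from the bump `φ`
acting in the full frequency variable `(ξ, k) ∈ ℝ^m × ℤ ⊂ ℝ^{m+1}`. -/
def PleN {m : ℕ} (φ : (Fin (m+1) → ℝ) → ℝ) (N : ℝ) (f : WG m → ℂ) : WG m → ℂ :=
  fmul (fun ξ k => ((φ (N⁻¹ • (Fin.snoc ξ ((k:ℤ) : ℝ) : Fin (m+1) → ℝ)) : ℝ) : ℂ)) f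

/-- Dyadic Littlewood–Paley piece `P_N` with `N = 2^j ≥ 1`:
`P_1 = P_{≤1}` and `P_N = P_{≤N} - P_{≤N/2}` for `N ≥ 2`. -/
def PNd {m : ℕ} (φ : (Fin (m+1) → ℝ) → ℝ) (j : ℕ) (f : WG m → ℂ) : WG m → ℂ :=
  if j = 0 then PleN φ 1 f
  else fun z => PleN φ ((2:ℝ) ^ j) f z - PleN φ ((2:ℝ) ^ (j-1)) f z

/-- Space-time `L^p` norm of `u : ℝ → WG m → ℂ` on the time region `I`. -/
def stLp (m : ℕ) (p : ℝ) (u : ℝ → WG m → ℂ) (I : Set ℝ) : ℝ≥0∞ :=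
  eLpNorm (fun q : WG m × ℝ => u q.2 q.1) (ENNReal.ofReal p)
    ((volume : Measure (WG m)).prod (Measure.restrict volume I))

/-- `l^q_γ L^p_{x,y,t}` norm: the `l^q` norm over `γ ∈ ℤ` of the space-time `L^p`
norms on the time windows `[2πγ, 2π(γ+1))`. -/
def lqLp (m : ℕ) (q p : ℝ) (u : ℝ → WG m → ℂ) : ℝ≥0∞ :=
  (∑' γ : ℤ, stLp m p u (Set.Ico (2*Real.pi*(γ:ℝ)) (2*Real.pi*((γ:ℝ)+1))) ^ q) ^ (1/q)

/-- `H¹` (Sobolev) norm on the waveguide, defined on the Fourier side. -/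
def H1n (m : ℕ) (f : WG m → ℂ) : ℝ≥0∞ :=
  (∑' k : ℤ, ∫⁻ ξ : Fin m → ℝ,
    ENNReal.ofReal (1 + rnorm ξ ^ 2 + (k:ℝ)^2) * (‖wFT f ξ k‖₊ : ℝ≥0∞) ^ 2) ^ (1/2 : ℝ)

/-- Membership in `H¹(ℝ^m × 𝕋)`. -/
def MemH1 (m : ℕ) (f : WG m → ℂ) : Prop := MemLp f 2 volume ∧ H1n m f < ⊤

/-- A `U²` atom: a step function in time, with `L²_{x,y}`-valued steps whose
squared norms sum to at most 1. -/
def IsU2Atom (m : ℕ) (a : ℝ → WG m → ℂ) : Prop :=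
  ∃ (n : ℕ) (t : Fin (n+1) → ℝ) (φ : Fin n → WG m → ℂ),
    StrictMono t ∧ (∑ j : Fin n, eLpNorm (φ j) 2 volume ^ 2) ≤ 1 ∧
    ∀ s z, a s z = ∑ j : Fin n, if t j.castSucc ≤ s ∧ s < t j.succ then φ j z else 0

/-- The atomic `U²` norm. -/
def U2norm (m : ℕ) (u : ℝ → WG m → ℂ) : ℝ≥0∞ :=
  sInf { c : ℝ≥0∞ | ∃ (lam : ℕ → ℂ) (a : ℕ → ℝ → WG m → ℂ),
    (∀ j, IsU2Atom m (a j)) ∧ (∀ s z, u s z = ∑' j, lam j * a j s z) ∧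
    c = ∑' j, (‖lam j‖₊ : ℝ≥0∞) }

/-- The `U²_Δ` norm: `U²` norm of `t ↦ e^{-itΔ} u(t)`. -/
def U2Δ (m : ℕ) (u : ℝ → WG m → ℂ) : ℝ≥0∞ := U2norm m (fun t => sprop m (-t) (u t))

/-- The `V²` (2-variation) norm. -/
def V2norm (m : ℕ) (v : ℝ → WG m → ℂ) : ℝ≥0∞ :=
  ⨆ (n : ℕ) (t : Fin (n+1) → ℝ) (_ : StrictMono t),
    (∑ j : Fin n, eLpNorm (fun z => v (t j.succ) z - v (t j.castSucc) z) 2 volume ^ 2) ^ (1/2 : ℝ)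

/-- The `V²_Δ` norm: `V²` norm of `t ↦ e^{-itΔ} v(t)`. -/
def V2Δ (m : ℕ) (v : ℝ → WG m → ℂ) : ℝ≥0∞ := V2norm m (fun t => sprop m (-t) (v t))

/-- Frequency projection onto the unit cube `C_c = c + [-1/2, 1/2)^{m+1}`, `c ∈ ℤ^{m+1}`. -/
def Pcube {m : ℕ} (c : Fin (m+1) → ℤ) (f : WG m → ℂ) : WG m → ℂ :=
  fmul (fun ξ k =>
    if ∀ i, ((c i : ℝ) - 1/2 ≤ (Fin.snoc ξ ((k:ℤ) : ℝ) : Fin (m+1) → ℝ) i ∧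
        (Fin.snoc ξ ((k:ℤ) : ℝ) : Fin (m+1) → ℝ) i < (c i : ℝ) + 1/2) then 1 else 0) f

/-- The `X^s_0(ℝ)` norm: `‖u‖² = Σ_{c ∈ ℤ^{m+1}} ⟨c⟩^{2s} ‖P_{C_c} u‖²_{U²_Δ}`. -/
def X0norm (m : ℕ) (s : ℝ) (u : ℝ → WG m → ℂ) : ℝ≥0∞ :=
  (∑' c : Fin (m+1) → ℤ,
    ENNReal.ofReal ((1 + ∑ i, (c i : ℝ)^2) ^ s) * U2Δ m (fun t => Pcube c (u t)) ^ 2) ^ (1/2 : ℝ)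

/-- The `Y^s(ℝ)` norm: `‖u‖² = Σ_{c ∈ ℤ^{m+1}} ⟨c⟩^{2s} ‖P_{C_c} u‖²_{V²_Δ}`. -/
def Y0full (m : ℕ) (s : ℝ) (u : ℝ → WG m → ℂ) : ℝ≥0∞ :=
  (∑' c : Fin (m+1) → ℤ,
    ENNReal.ofReal ((1 + ∑ i, (c i : ℝ)^2) ^ s) * V2Δ m (fun t => Pcube c (u t)) ^ 2) ^ (1/2 : ℝ)

/-- Restriction `Y^s(I)` norm. -/
def Ynorm (m : ℕ) (s : ℝ) (u : ℝ → WG m → ℂ) (I : Set ℝ) : ℝ≥0∞ :=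
  sInf { c | ∃ v : ℝ → WG m → ℂ, (∀ t ∈ I, v t = u t) ∧ c = Y0full m s v }

/-- The modified global `X¹(ℝ)` norm, allowing a free evolution `e^{itΔ}φ₋` at `t = -∞`:
`‖u‖² = ‖φ₋‖²_{H¹} + ‖u - e^{itΔ}φ₋‖²_{X¹_0}`. -/
def X1normR (m : ℕ) (u : ℝ → WG m → ℂ) : ℝ≥0∞ :=
  sInf { c | ∃ φ : WG m → ℂ, MemH1 m φ ∧
    Tendsto (fun t => H1n m (fun z => sprop m (-t) (u t) z - φ z)) atBot (𝓝 0) ∧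
    c = (H1n m φ ^ 2 + X0norm m 1 (fun t z => u t z - sprop m t φ z) ^ 2) ^ (1/2 : ℝ) }

/-- Restriction `X¹(I)` norm. -/
def X1norm (m : ℕ) (u : ℝ → WG m → ℂ) (I : Set ℝ) : ℝ≥0∞ :=
  sInf { c | ∃ v : ℝ → WG m → ℂ, (∀ t ∈ I, v t = u t) ∧ c = X1normR m v }

/-- The scattering `Z(I)` norm for the cubic `ℝ³ × 𝕋` problem (with exponent `p₀`):
`‖u‖_{Z(I)} = (Σ_{N ≥ 1 dyadic} N^{6-p₀} ‖1_I P_N u‖^{p₀}_{l^{2p₀/(p₀-3)}_γ L^{p₀}})^{1/p₀}`. -/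
def Znorm3 (φ : (Fin 4 → ℝ) → ℝ) (p₀ : ℝ) (u : ℝ → WG 3 → ℂ) (I : Set ℝ) : ℝ≥0∞ :=
  (∑' j : ℕ, ENNReal.ofReal (((2:ℝ) ^ j) ^ (6 - p₀)) *
    lqLp 3 (2*p₀/(p₀-3)) p₀ (Set.indicator I (fun t => PNd φ j (u t))) ^ p₀) ^ (1/p₀)

/-- The `Z'(I)` norm for the cubic `ℝ³ × 𝕋` problem: `‖u‖_{Z'} = ‖u‖_Z^{3/4} ‖u‖_{X¹}^{1/4}`. -/
def Zprime3 (φ : (Fin 4 → ℝ) → ℝ) (p₀ : ℝ) (u : ℝ → WG 3 → ℂ) (I : Set ℝ) : ℝ≥0∞ :=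
  Znorm3 φ p₀ u I ^ (3/4 : ℝ) * X1norm 3 u I ^ (1/4 : ℝ)

/-- Auxiliary piece of the quintic `Z` norm with exponent `p₀`. -/
def Z2aux (φ : (Fin 3 → ℝ) → ℝ) (p₀ : ℝ) (u : ℝ → WG 2 → ℂ) (I : Set ℝ) : ℝ≥0∞ :=
  (∑' j : ℕ, ENNReal.ofReal (((2:ℝ) ^ j) ^ (5 - p₀/2)) *
    lqLp 2 (4*p₀/(p₀-4)) p₀ (Set.indicator I (fun t => PNd φ j (u t))) ^ p₀) ^ (1/p₀)

/-- The scattering `Z(I)` norm for the quintic `ℝ² × 𝕋` problem: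
`‖u‖_{Z(I)} = Σ_{p₀ = 8, 10} (Σ_{N≥1} N^{5-p₀/2} ‖1_I P_N u‖^{p₀}_{l^{4p₀/(p₀-4)}_γ L^{p₀}})^{1/p₀}`. -/
def Znorm2 (φ : (Fin 3 → ℝ) → ℝ) (u : ℝ → WG 2 → ℂ) (I : Set ℝ) : ℝ≥0∞ :=
  Z2aux φ 8 u I + Z2aux φ 10 u I

/-- The `Z'(I)` norm for the quintic `ℝ² × 𝕋` problem. -/
def Zprime2 (φ : (Fin 3 → ℝ) → ℝ) (u : ℝ → WG 2 → ℂ) (I : Set ℝ) : ℝ≥0∞ :=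
  Znorm2 φ u I ^ (3/4 : ℝ) * X1norm 2 u I ^ (1/4 : ℝ)

/-- The Duhamel `N(I)` norm for an interval `I` with left endpoint `a`:
`‖h‖_{N(I)} = ‖∫_a^t e^{i(t-s)Δ} h(s) ds‖_{X¹(I)}`. -/
def Nnorm (m : ℕ) (a : ℝ) (h : ℝ → WG m → ℂ) (I : Set ℝ) : ℝ≥0∞ :=
  X1norm m (fun t z => ∫ s in a..t, sprop m (t - s) (h s) z) I

/-- The defocusing power nonlinearity `|f|^{pw} f`. -/
def nonlin (m pw : ℕ) (f : WG m → ℂ) : WG m → ℂ := fun z => ((‖f z‖ : ℝ) : ℂ) ^ pw * f z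

/-- `u` is a strong solution on `I` of `(i∂_t + Δ)u = |u|^{pw} u` with data `u₀` at time `t₀`,
i.e. `u` satisfies the Duhamel integral equation. -/
def IsSolution (m pw : ℕ) (u : ℝ → WG m → ℂ) (t₀ : ℝ) (u₀ : WG m → ℂ) (I : Set ℝ) : Prop :=
  ∀ t ∈ I, ∀ᵐ z ∂(volume : Measure (WG m)), u t z =
    sprop m (t - t₀) u₀ z - Complex.I * ∫ s in t₀..t, sprop m (t - s) (nonlin m pw (u s)) z

/-- `u` is a strong solution on `I` of the approximate equation
`(i∂_t + Δ)u = ρ |u|^{pw} u + e`. -/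
def IsApproxSolution (m pw : ℕ) (ρ : ℝ) (u e : ℝ → WG m → ℂ) (I : Set ℝ) : Prop :=
  ∀ t₀ ∈ I, ∀ t ∈ I, ∀ᵐ z ∂(volume : Measure (WG m)), u t z =
    sprop m (t - t₀) (u t₀) z -
      Complex.I * ∫ s in t₀..t,
        ((ρ : ℂ) * sprop m (t - s) (nonlin m pw (u s)) z + sprop m (t - s) (e s) z)

/-- Membership in `C(I : H¹)`. -/
def ContH1 (m : ℕ) (u : ℝ → WG m → ℂ) (I : Set ℝ) : Prop :=
  (∀ t ∈ I, MemH1 m (u t)) ∧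
  ∀ t₀ ∈ I, Tendsto (fun t => H1n m (fun z => u t z - u t₀ z)) (𝓝[I] t₀) (𝓝 0)

/-- Membership in the uniqueness space `X¹_c(I) = X¹(I) ∩ C(I : H¹)`. -/
def MemX1c (m : ℕ) (u : ℝ → WG m → ℂ) (I : Set ℝ) : Prop :=
  X1norm m u I < ⊤ ∧ ContH1 m u I

/-- Membership in `X¹_{c,loc}(I)`: in `C_loc(I : H¹)` with finite `X¹(J)` norm
for every compact `J ⊆ I`. -/
def MemX1cloc (m : ℕ) (u : ℝ → WG m → ℂ) (I : Set ℝ) : Prop :=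
  ContH1 m u I ∧ ∀ J : Set ℝ, IsCompact J → J ⊆ I → X1norm m u J < ⊤

/-- Hölder conjugate exponent. -/
def hconj (p : ℝ) : ℝ := p / (p - 1)

/-- `h : ℝ → WG m → ℂ` is `C_c^∞` in the sense that it lifts to a smooth function
on `ℝ^m × ℝ × ℝ`, periodic in `y` and compactly supported in `(x, t)`. -/
def IsSmoothCc (m : ℕ) (h : ℝ → WG m → ℂ) : Prop :=
  ∃ H : (Fin m → ℝ) → ℝ → ℝ → ℂ,
    ContDiff ℝ (⊤ : ℕ∞) (fun q : ((Fin m → ℝ) × ℝ) × ℝ => H q.1.1 q.1.2 q.2) ∧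
    (∀ x y t, H x (y + 2 * Real.pi) t = H x y t) ∧
    (∃ R : ℝ, ∀ x y t, R ≤ rnorm x ∨ R ≤ |t| → H x y t = 0) ∧
    ∀ (x : Fin m → ℝ) (y t : ℝ), h t (x, (y : AddCircle (2 * Real.pi))) = H x y t

/-- Fourier transform on `ℝ^d`. -/
def rFT (d : ℕ) (f : (Fin d → ℝ) → ℂ) (ξ : Fin d → ℝ) : ℂ :=
  ∫ x : Fin d → ℝ, Complex.exp (-Complex.I * ((∑ i, ξ i * x i : ℝ) : ℂ)) * f x

/-- The free Schrödinger propagator `e^{itΔ}` on `ℝ^d`. -/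
def rprop (d : ℕ) (t : ℝ) (f : (Fin d → ℝ) → ℂ) : (Fin d → ℝ) → ℂ :=
  fun x => (((2 * Real.pi) ^ d : ℝ)⁻¹ : ℂ) * ∫ ξ : Fin d → ℝ,
    Complex.exp (Complex.I * (((∑ i, ξ i * x i) - t * (∑ i, ξ i ^ 2) : ℝ) : ℂ)) * rFT d f ξ

/-- The representative in `[-π, π)` of a point of `𝕋 = ℝ/(2πℤ)`. -/
def toBall (y : AddCircle (2 * Real.pi)) : ℝ :=
  ((AddCircle.equivIco (2 * Real.pi) (-Real.pi)) y : ℝ)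

/-- The rescaled Euclidean profile `f_N` on `ℝ³ × 𝕋` associated to `ψ ∈ Ḣ¹(ℝ⁴)`:
`f_N(y) = φ_N(Ψ^{-1}(y))` where `φ_N(x) = N η(N^{1/2} x) ψ(Nx)`. -/
def fNprof (η : (Fin 4 → ℝ) → ℝ) (ψ : (Fin 4 → ℝ) → ℂ) (N : ℝ) : WG 3 → ℂ :=
  fun p => (N : ℂ) * ((η (Real.sqrt N • (Fin.snoc p.1 (toBall p.2) : Fin 4 → ℝ)) : ℝ) : ℂ) *
    ψ (N • (Fin.snoc p.1 (toBall p.2) : Fin 4 → ℝ))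

/-- The frequency-localized Schrödinger kernel on `ℝ³ × 𝕋` (lifted to `y ∈ ℝ`),
written as a tensor product of an `ℝ³` kernel and a `𝕋` kernel. -/
def KN (φ1 : ℝ → ℝ) (N : ℝ) (x : Fin 3 → ℝ) (y t : ℝ) : ℂ :=
  (∫ ξ : Fin 3 → ℝ, ((∏ i, φ1 (ξ i / N) ^ 2 : ℝ) : ℂ) *
      Complex.exp (Complex.I * (((∑ i, x i * ξ i) + t * (∑ i, ξ i ^ 2) : ℝ) : ℂ))) *
  ∑' k : ℤ, ((φ1 ((k : ℝ) / N) ^ 2 : ℝ) : ℂ) *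
      Complex.exp (Complex.I * ((y * (k:ℝ) + t * (k:ℝ)^2 : ℝ) : ℂ))

/-- Space-time Fourier transform (frequency `(ξ, k, τ)`) of a kernel on
`ℝ³ × 𝕋 × [-2π, 2π]`, lifted to `y ∈ ℝ`. -/
def stFT3 (F : (Fin 3 → ℝ) → ℝ → ℝ → ℂ) (ξ : Fin 3 → ℝ) (k : ℤ) (τ : ℝ) : ℂ :=
  ∫ t in Set.Icc (-(2*Real.pi)) (2*Real.pi), ∫ y in Set.Ioc 0 (2*Real.pi), ∫ x : Fin 3 → ℝ,
    F x y t * Complex.exp (-Complex.I * (((∑ i, x i * ξ i) + y * (k:ℝ) + t * τ : ℝ) : ℂ))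

/-- The Besov-type functional `Λ_∞` on sequences in `H¹(ℝ³ × 𝕋)`:
`limsup_k sup_{N,t,x,y} N^{-1} |(e^{itΔ} P_N f_k)(x,y)|`. -/
def Lam3 (φ : (Fin 4 → ℝ) → ℝ) (f : ℕ → WG 3 → ℂ) : ℝ≥0∞ :=
  Filter.limsup (fun k => ⨆ (j : ℕ) (t : ℝ) (z : WG 3),
    (ENNReal.ofReal ((2:ℝ) ^ j))⁻¹ * (‖PNd φ j (sprop 3 t (f k)) z‖₊ : ℝ≥0∞)) atTop

/-- The Besov-type functional `Λ_∞` on sequences in `H¹(ℝ² × 𝕋)`: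
`limsup_k sup_{N,t,x,y} N^{-1/2} |(e^{itΔ} P_N f_k)(x,y)|`. -/
def Lam2 (φ : (Fin 3 → ℝ) → ℝ) (f : ℕ → WG 2 → ℂ) : ℝ≥0∞ :=
  Filter.limsup (fun k => ⨆ (j : ℕ) (t : ℝ) (z : WG 2),
    (ENNReal.ofReal (((2:ℝ) ^ j) ^ (1/2 : ℝ)))⁻¹ * (‖PNd φ j (sprop 2 t (f k)) z‖₊ : ℝ≥0∞)) atTop

end


/-!
With `ψ = φ1(·/N)²` and `T = 2πγ + t`, the kernel `K_N(x, y, T)` is the product of three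
one-dimensional oscillatory integrals `∫ ψ(s) e^{i(xs + Ts²)} ds` and the lattice sum
`∑ₖ ψ(k) e^{i(yk + Tk²)}`, and `|T| ≥ |γ|` once `|γ| ≥ 2` and `|t| ≤ 2π`.
Completing the square reduces the oscillatory integrals over intervals to Fresnel integrals,
which are bounded uniformly in the endpoints; integrating by parts against them bounds each
real factor by `O(|T|^{-1/2})` uniformly in `N`, because `‖ψ'‖_∞ · |supp ψ|` is scale
invariant. The lattice sum has `O(N)` terms of modulus `O(1)`.
On the Fourier side, Fourier inversion in each `xᵢ` and orthogonality of the characters in `y`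
turn the `(x, y)`-transform of `K_N(·, ·, T)` into `(2π)⁴ ψ(ξ₁)ψ(ξ₂)ψ(ξ₃)ψ(k)` times a unimodular
factor, so the `t`-integral over `[-2π, 2π]` is bounded independently of `N` and `γ`.
-/

open Complex intervalIntegral
open scoped Real ContDiff

theorem hasCompactSupport_of_eq_zero_of_le_abs {f : ℝ → ℝ} {R : ℝ}
    (h : ∀ s, R ≤ |s| → f s = 0) : HasCompactSupport f :=
  HasCompactSupport.intro (isCompact_closedBall 0 R) fun s hs => h s (by
    rw [Metric.mem_closedBall, dist_zero_right, Real.norm_eq_abs, not_le] at hs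
    exact hs.le)

theorem exists_pos_abs_le_of_hasCompactSupport {f : ℝ → ℝ} (hf : Continuous f)
    (hc : HasCompactSupport f) : ∃ M > 0, ∀ s, |f s| ≤ M := by
  obtain ⟨M, hM⟩ := hf.bounded_above_of_compact_support hc
  exact ⟨max M 1, by positivity, fun s => (hM s).trans (le_max_left _ _)⟩

theorem comp_div_eq_zero_of_le_abs {χ : ℝ → ℝ} {ρ N : ℝ} (hχ : ∀ u, ρ ≤ |u| → χ u = 0)
    (hN : 0 < N) (s : ℝ) (hs : ρ * N ≤ |s|) : χ (s / N) = 0 :=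
  hχ _ (by rwa [abs_div, abs_of_pos hN, le_div_iff₀ hN])

/-! ### Fresnel-type integrals -/

theorem norm_exp_I_mul_mul_sq (σ u : ℝ) : ‖exp (I * σ * u ^ 2)‖ = 1 := by
  rw [mul_assoc, ← ofReal_pow, ← ofReal_mul, norm_exp_I_mul_ofReal]

theorem integral_exp_I_mul_sq_eq {σ a b : ℝ} (hσ : σ ≠ 0) (ha : 0 < a) (hab : a ≤ b) :
    ∫ u in a..b, exp (I * σ * u ^ 2)
      = (2 * I * σ * b)⁻¹ * exp (I * σ * b ^ 2) - (2 * I * σ * a)⁻¹ * exp (I * σ * a ^ 2)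
        + ∫ u in a..b, (2 * I * σ * u ^ 2)⁻¹ * exp (I * σ * u ^ 2) := by
  have hne : ∀ u ∈ Set.uIcc a b, 2 * I * σ * u ≠ 0 := fun u hu => by
    rw [Set.uIcc_of_le hab] at hu
    simp [I_ne_zero, hσ, (ha.trans_le hu.1).ne']
  -- `u ↦ (2iσu)⁻¹` times the derivative of `u ↦ e^{iσu²}` is `e^{iσu²}`
  have hG : ∀ u ∈ Set.uIcc a b, HasDerivAt (fun u : ℝ => (2 * I * σ * u)⁻¹)
      (-(2 * I * σ * u ^ 2)⁻¹) u := fun u hu => by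
    have hlin : HasDerivAt (fun u : ℝ => 2 * I * σ * u) (2 * I * σ) u := by
      simpa using (hasDerivAt_id u).ofReal_comp.const_mul (2 * I * σ)
    refine (hlin.inv (hne u hu)).congr_deriv ?_
    field_simp
  have hF : ∀ u ∈ Set.uIcc a b, HasDerivAt (fun u : ℝ => exp (I * σ * u ^ 2))
      (2 * I * σ * u * exp (I * σ * u ^ 2)) u := fun u _ => by
    convert ((hasDerivAt_pow 2 (u : ℂ)).const_mul (I * σ)).cexp.comp_ofReal using 1
    push_cast; ring
  have hG' : ContinuousOn (fun u : ℝ => -(2 * I * σ * u ^ 2)⁻¹) (Set.uIcc a b) :=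
    (ContinuousOn.inv₀ (by fun_prop) fun u hu => by simpa [sq, mul_assoc] using hne u hu).neg
  have hparts := integral_mul_deriv_eq_deriv_mul hG hF hG'.intervalIntegrable
    (by apply ContinuousOn.intervalIntegrable; fun_prop)
  rw [integral_congr fun u hu => by rw [← mul_assoc, inv_mul_cancel₀ (hne u hu), one_mul]]
    at hparts
  simp_rw [hparts, neg_mul, intervalIntegral.integral_neg, sub_neg_eq_add]

theorem norm_integral_exp_I_mul_sq_le_inv {σ a b : ℝ} (hσ : |σ| = 1) (ha : 0 < a) (hab : a ≤ b) :
    ‖∫ u in a..b, exp (I * σ * u ^ 2)‖ ≤ a⁻¹ := by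
  have hpos : ∀ u ∈ Set.uIcc a b, 0 < u := fun u hu => by
    rw [Set.uIcc_of_le hab] at hu; exact ha.trans_le hu.1
  have hboundary (u : ℝ) (hu : 0 < u) : ‖(2 * I * σ * u)⁻¹ * exp (I * σ * u ^ 2)‖ = (2 * u)⁻¹ := by
    simp [norm_exp_I_mul_mul_sq, hσ, abs_of_pos hu]
  have hprim : ∀ u ∈ Set.uIcc a b, HasDerivAt (fun u : ℝ => -(2 * u)⁻¹) (2 * u ^ 2)⁻¹ u :=
    fun u hu => by
      have hlin : HasDerivAt (fun u : ℝ => 2 * u) 2 u := by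
        simpa using (hasDerivAt_id u).const_mul (2 : ℝ)
      refine (hlin.inv (by simp [(hpos u hu).ne'])).neg.congr_deriv ?_
      field_simp
  have hint : IntervalIntegrable (fun u : ℝ => (2 * u ^ 2)⁻¹) volume a b :=
    (ContinuousOn.inv₀ (by fun_prop) fun u hu => by simp [(hpos u hu).ne']).intervalIntegrable
  have htail : ‖∫ u in a..b, (2 * I * σ * u ^ 2)⁻¹ * exp (I * σ * u ^ 2)‖
      ≤ (2 * a)⁻¹ - (2 * b)⁻¹ := by
    calc _ ≤ ∫ u in a..b, (2 * u ^ 2)⁻¹ := by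
          refine norm_integral_le_of_norm_le hab (ae_of_all _ fun u hu => ?_) hint
          have hu0 := hpos u (Set.uIoc_subset_uIcc (by rwa [Set.uIoc_of_le hab]))
          simp [norm_exp_I_mul_mul_sq, hσ, abs_of_pos hu0]
      _ = (2 * a)⁻¹ - (2 * b)⁻¹ := by
          rw [integral_eq_sub_of_hasDerivAt hprim hint]; ring
  rw [integral_exp_I_mul_sq_eq (abs_ne_zero.mp (hσ ▸ one_ne_zero)) ha hab]
  calc _ ≤ ‖(2 * I * σ * b)⁻¹ * exp (I * σ * b ^ 2)‖ + ‖(2 * I * σ * a)⁻¹ * exp (I * σ * a ^ 2)‖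
        + ‖∫ u in a..b, (2 * I * σ * u ^ 2)⁻¹ * exp (I * σ * u ^ 2)‖ :=
        (norm_add_le _ _).trans (add_le_add (norm_sub_le _ _) le_rfl)
    _ ≤ (2 * b)⁻¹ + (2 * a)⁻¹ + ((2 * a)⁻¹ - (2 * b)⁻¹) := by
        rw [hboundary b (ha.trans_le hab), hboundary a ha]; gcongr
    _ = a⁻¹ := by ring

theorem norm_integral_zero_exp_I_mul_sq_le {σ X : ℝ} (hσ : |σ| = 1) :
    ‖∫ u in (0 : ℝ)..X, exp (I * σ * u ^ 2)‖ ≤ 2 := by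
  have hcont : Continuous fun u : ℝ => exp (I * σ * u ^ 2) := by fun_prop
  have short {Y : ℝ} (hY : |Y| ≤ 1) : ‖∫ u in (0 : ℝ)..Y, exp (I * σ * u ^ 2)‖ ≤ 1 := by
    simpa using (norm_integral_le_of_norm_le_const (a := 0) (b := Y) (C := 1)
      fun u _ => (norm_exp_I_mul_mul_sq σ u).le).trans (by simpa using hY)
  wlog hX : 0 ≤ X generalizing X
  · have heven : ∫ u in (0 : ℝ)..-X, exp (I * σ * u ^ 2)
        = ∫ u in (0 : ℝ)..-X, exp (I * σ * ((-u : ℝ) : ℂ) ^ 2) := by simp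
    rw [← norm_neg, ← integral_symm]
    have h := this (X := -X) (by linarith)
    rw [heven, integral_comp_neg (fun u : ℝ => exp (I * σ * (u : ℂ) ^ 2))] at h
    simpa using h
  rcases le_or_gt X 1 with hX1 | hX1
  · exact (short (by rwa [abs_of_nonneg hX])).trans one_le_two
  rw [← integral_add_adjacent_intervals (b := 1) (hcont.intervalIntegrable _ _)
    (hcont.intervalIntegrable _ _)]
  calc _ ≤ 1 + (1 : ℝ)⁻¹ := (norm_add_le _ _).trans (add_le_add (short (by simp))
          (norm_integral_exp_I_mul_sq_le_inv hσ one_pos hX1.le))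
    _ = 2 := by norm_num

theorem norm_integral_exp_I_mul_sq_le {σ : ℝ} (hσ : |σ| = 1) (a b : ℝ) :
    ‖∫ u in a..b, exp (I * σ * u ^ 2)‖ ≤ 4 := by
  have hcont : Continuous fun u : ℝ => exp (I * σ * u ^ 2) := by fun_prop
  rw [← integral_add_adjacent_intervals (b := 0) (hcont.intervalIntegrable _ _)
    (hcont.intervalIntegrable _ _), integral_symm 0 a]
  calc _ ≤ ‖∫ u in (0 : ℝ)..a, exp (I * σ * u ^ 2)‖ + ‖∫ u in (0 : ℝ)..b, exp (I * σ * u ^ 2)‖ :=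
        (norm_add_le _ _).trans_eq (by rw [norm_neg])
    _ ≤ 2 + 2 := add_le_add (norm_integral_zero_exp_I_mul_sq_le hσ)
        (norm_integral_zero_exp_I_mul_sq_le hσ)
    _ = 4 := by norm_num

theorem norm_integral_exp_quadratic_phase_le {t : ℝ} (ht : t ≠ 0) (x a b : ℝ) :
    ‖∫ ξ in a..b, exp (I * ((x * ξ + t * ξ ^ 2 : ℝ) : ℂ))‖ ≤ 4 / √|t| := by
  have habs : 0 < |t| := abs_pos.mpr ht
  set r := √|t|
  have hr : 0 < r := Real.sqrt_pos.mpr habs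
  set σ := t / |t|
  have hσ : |σ| = 1 := by rw [abs_div, abs_abs, div_self habs.ne']
  -- complete the square: `x ξ + t ξ² = σ (r ξ + r x/(2t))² - x²/(4t)`
  have hsq (ξ : ℝ) : exp (I * ((x * ξ + t * ξ ^ 2 : ℝ) : ℂ))
      = exp (I * ((-(x ^ 2 / (4 * t)) : ℝ) : ℂ))
        * exp (I * σ * ((r * ξ + r * (x / (2 * t)) : ℝ) : ℂ) ^ 2) := by
    have hr2 : r ^ 2 = |t| := Real.sq_sqrt habs.le
    have : σ * (r * ξ + r * (x / (2 * t))) ^ 2 = t * (ξ + x / (2 * t)) ^ 2 := by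
      rw [← mul_add, mul_pow, hr2, ← mul_assoc, div_mul_cancel₀ _ habs.ne']
    rw [← Complex.exp_add, mul_assoc I, ← ofReal_pow, ← ofReal_mul, this]
    have htC : (t : ℂ) ≠ 0 := by exact_mod_cast ht
    congr 1
    push_cast
    field_simp
    ring
  simp_rw [hsq, intervalIntegral.integral_const_mul, norm_mul, norm_exp_I_mul_ofReal, one_mul]
  rw [integral_comp_mul_add (fun u : ℝ => exp (I * σ * (u : ℂ) ^ 2)) hr.ne',
    norm_smul, Real.norm_eq_abs, abs_inv, abs_of_pos hr, inv_mul_eq_div]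
  gcongr
  exact norm_integral_exp_I_mul_sq_le hσ _ _

/-! ### The factor on `ℝ` -/

noncomputable def freeKernel (ψ : ℝ → ℝ) (t x : ℝ) : ℂ :=
  ∫ s, (ψ s : ℂ) * exp (I * ((x * s + t * s ^ 2 : ℝ) : ℂ))

theorem norm_freeKernel_le {f : ℝ → ℝ} {R L t : ℝ} (hf : ContDiff ℝ 1 f)
    (hR : 0 ≤ R) (hsupp : ∀ s, R ≤ |s| → f s = 0) (hL : ∀ s, |deriv f s| ≤ L) (ht : t ≠ 0)
    (x : ℝ) :
    ‖freeKernel f t x‖ ≤ 8 * R * L / √|t| := by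
  unfold freeKernel
  set e : ℝ → ℂ := fun s => exp (I * ((x * s + t * s ^ 2 : ℝ) : ℂ))
  have he : Continuous e := by fun_prop
  have hsub : Function.support (fun s => (f s : ℂ) * e s) ⊆ Set.Ioc (-R) R := by
    intro s hs
    have hs : |s| < R := lt_of_not_ge fun h => hs (by simp [hsupp s h])
    exact ⟨by linarith [neg_abs_le s], by linarith [le_abs_self s]⟩
  rw [← integral_eq_integral_of_support_subset hsub]
  -- integrate by parts against the primitive `s ↦ ∫_{-R}^s e`, which is `O(|t|^{-1/2})`
  have hf' : ∀ s ∈ Set.uIcc (-R) R, HasDerivAt (fun s => (f s : ℂ)) ((deriv f s : ℝ) : ℂ) s :=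
    fun s _ => ((hf.differentiable one_ne_zero s).hasDerivAt).ofReal_comp
  have hE : ∀ s ∈ Set.uIcc (-R) R, HasDerivAt (fun s => ∫ u in (-R)..s, e u) (e s) s :=
    fun s _ => integral_hasDerivAt_right (he.intervalIntegrable _ _)
      he.stronglyMeasurable.stronglyMeasurableAtFilter he.continuousAt
  have hcont' : Continuous fun s => ((deriv f s : ℝ) : ℂ) :=
    continuous_ofReal.comp (hf.continuous_deriv le_rfl)
  rw [integral_mul_deriv_eq_deriv_mul hf' hE (hcont'.intervalIntegrable _ _)
    (he.intervalIntegrable _ _), hsupp R (le_abs_self R),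
    hsupp (-R) (by rw [abs_neg]; exact le_abs_self R)]
  simp only [Complex.ofReal_zero, zero_mul, sub_zero, zero_sub, norm_neg]
  calc _ ≤ L * (4 / √|t|) * |R - -R| := norm_integral_le_of_norm_le_const fun s _ => by
        rw [norm_mul, norm_real, Real.norm_eq_abs]
        exact mul_le_mul (hL s) (norm_integral_exp_quadratic_phase_le ht x _ _) (norm_nonneg _)
          ((abs_nonneg _).trans (hL s))
    _ = 8 * R * L / √|t| := by rw [sub_neg_eq_add, abs_of_nonneg (by linarith : 0 ≤ R + R)]; ring

theorem norm_freeKernel_comp_div_le {χ : ℝ → ℝ} {ρ D N t : ℝ} (hχ : ContDiff ℝ 1 χ) (hρ : 0 ≤ ρ)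
    (hsupp : ∀ u, ρ ≤ |u| → χ u = 0) (hD : ∀ u, |deriv χ u| ≤ D) (hN : 0 < N) (ht : t ≠ 0)
    (x : ℝ) : ‖freeKernel (fun s => χ (s / N)) t x‖ ≤ 8 * ρ * D / √|t| := by
  have hderiv (s : ℝ) : deriv (fun s => χ (s / N)) s = N⁻¹ * deriv χ (s / N) := by
    simp_rw [div_eq_inv_mul]
    exact deriv_comp_mul_left N⁻¹ χ s
  calc _ ≤ 8 * (ρ * N) * (D / N) / √|t| :=
        norm_freeKernel_le (f := fun s => χ (s / N))
          (hχ.comp (contDiff_id.div_const N)) (by positivity) (comp_div_eq_zero_of_le_abs hsupp hN)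
          (fun s => by
            rw [hderiv, abs_mul, abs_inv, abs_of_pos hN, inv_mul_eq_div]
            exact div_le_div_of_nonneg_right (hD _) hN.le) ht x
    _ = 8 * ρ * D / √|t| := by field_simp

theorem integral_prod_mul_exp_eq_prod_freeKernel {d : ℕ} (ψ : ℝ → ℝ) (t : ℝ) (x : Fin d → ℝ) :
    ∫ ξ : Fin d → ℝ, ((∏ i, ψ (ξ i) : ℝ) : ℂ)
        * exp (I * (((∑ i, x i * ξ i) + t * ∑ i, ξ i ^ 2 : ℝ) : ℂ))
      = ∏ i, freeKernel ψ t (x i) := by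
  simp only [freeKernel]
  rw [← integral_fintype_prod_volume_eq_prod
    (f := fun i s => (ψ s : ℂ) * exp (I * ((x i * s + t * s ^ 2 : ℝ) : ℂ)))]
  congr 1 with ξ
  rw [Finset.prod_mul_distrib, ← Complex.exp_sum, ← Finset.mul_sum, ← ofReal_sum,
    Finset.sum_add_distrib, ← Finset.mul_sum]
  push_cast
  rfl

open FourierTransform in
theorem integral_integral_mul_exp_mul_exp_neg {g : ℝ → ℂ} (hg : ContDiff ℝ ∞ g)
    (hc : HasCompactSupport g) (w : ℝ) :
    ∫ s, (∫ η, g η * exp (I * ((s * η : ℝ) : ℂ))) * exp (-I * ((s * w : ℝ) : ℂ))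
      = 2 * π * g w := by
  have hinv (s : ℝ) : ∫ η, g η * exp (I * ((s * η : ℝ) : ℂ)) = 𝓕⁻ g (s / (2 * π)) := by
    rw [Real.fourierInv_eq_fourier_neg, Real.fourier_real_eq_integral_exp_smul]
    congr 1 with η
    rw [smul_eq_mul, mul_comm]
    congr 2
    push_cast
    field_simp
  have hinversion : 𝓕 (𝓕⁻ g) w = g w := by
    have h := congrFun (congrArg (⇑) (FourierInvPair.fourier_fourierInv_eq
      (F := SchwartzMap ℝ ℂ) (hc.toSchwartzMap hg))) w
    rwa [SchwartzMap.fourier_coe, SchwartzMap.fourierInv_coe] at h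
  set G : ℝ → ℂ := fun v => exp (((-2 * π * v * w : ℝ) : ℂ) * I) • 𝓕⁻ g v
  calc _ = ∫ s, G (s / (2 * π)) := by
        simp_rw [hinv]
        congr 1 with s
        simp only [G]
        rw [smul_eq_mul, mul_comm]
        congr 2
        push_cast
        field_simp
    _ = 2 * π * g w := by
        rw [Measure.integral_comp_div, abs_of_pos Real.two_pi_pos, ← hinversion,
          Real.fourier_real_eq_integral_exp_smul, Complex.real_smul]
        push_cast
        simp only [G]
        push_cast
        rfl

theorem integral_freeKernel_mul_exp_neg {ψ : ℝ → ℝ} (hψ : ContDiff ℝ ∞ ψ)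
    (hc : HasCompactSupport ψ) (t w : ℝ) :
    ∫ s, freeKernel ψ t s * exp (-I * ((s * w : ℝ) : ℂ))
      = 2 * π * ψ w * exp (I * ((t * w ^ 2 : ℝ) : ℂ)) := by
  have hg : ContDiff ℝ ∞ fun η : ℝ => (ψ η : ℂ) * exp (I * ((t * η ^ 2 : ℝ) : ℂ)) :=
    (ofRealCLM.contDiff.comp hψ).mul
      (contDiff_const.mul (ofRealCLM.contDiff.comp (contDiff_const.mul (contDiff_id.pow 2)))).cexp
  have hgc : HasCompactSupport fun η : ℝ => (ψ η : ℂ) * exp (I * ((t * η ^ 2 : ℝ) : ℂ)) :=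
    (hc.comp_left ofReal_zero).mul_right
  rw [mul_assoc, ← integral_integral_mul_exp_mul_exp_neg hg hgc]
  congr 1 with s
  congr 1
  simp only [freeKernel]
  congr 1 with η
  rw [mul_assoc, ← Complex.exp_add]
  push_cast; ring_nf

/-! ### The factor on `𝕋` -/

theorem integral_Ioc_exp_I_mul_int (m : ℤ) :
    ∫ y in Set.Ioc 0 (2 * π), exp (I * ((y * m : ℝ) : ℂ)) = if m = 0 then (2 * π : ℂ) else 0 := by
  rw [← integral_of_le Real.two_pi_pos.le]
  split_ifs with hm
  · simp [hm]
  have hc : I * m ≠ 0 := mul_ne_zero I_ne_zero (by exact_mod_cast hm)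
  have hexp : exp (I * m * (2 * π : ℝ)) = 1 := by
    rw [← exp_int_mul_two_pi_mul_I m]; push_cast; ring_nf
  simp_rw [show ∀ y : ℝ, I * ((y * m : ℝ) : ℂ) = I * m * y from fun y => by push_cast; ring]
  rw [integral_exp_mul_complex hc, hexp]
  simp

theorem int_mem_Icc_floor_of_abs_lt {R : ℝ} {k : ℤ} (hk : |(k : ℝ)| < R) :
    k ∈ Finset.Icc (-⌊R⌋) ⌊R⌋ := by
  rw [Finset.mem_Icc, neg_le, Int.le_floor, Int.le_floor]
  push_cast
  constructor <;> linarith [neg_abs_le (k : ℝ), le_abs_self (k : ℝ)]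

section PeriodicKernel

variable {ψ : ℝ → ℝ} {R : ℝ}

noncomputable def periodicKernel (ψ : ℝ → ℝ) (t y : ℝ) : ℂ :=
  ∑' k : ℤ, (ψ k : ℂ) * exp (I * ((y * k + t * k ^ 2 : ℝ) : ℂ))

theorem periodicKernel_eq_sum (hsupp : ∀ s, R ≤ |s| → ψ s = 0) (t y : ℝ) :
    periodicKernel ψ t y
      = ∑ k ∈ Finset.Icc (-⌊R⌋) ⌊R⌋, (ψ k : ℂ) * exp (I * ((y * k + t * k ^ 2 : ℝ) : ℂ)) :=
  tsum_eq_sum fun k hk => by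
    rw [hsupp k (le_of_not_gt fun h => hk (int_mem_Icc_floor_of_abs_lt h))]
    simp

theorem norm_periodicKernel_le {M : ℝ} (hR : 0 ≤ R) (hsupp : ∀ s, R ≤ |s| → ψ s = 0)
    (hM : ∀ s, |ψ s| ≤ M) (t y : ℝ) : ‖periodicKernel ψ t y‖ ≤ (2 * R + 1) * M := by
  rw [periodicKernel_eq_sum hsupp]
  refine (norm_sum_le _ _).trans ?_
  have hcard : ((Finset.Icc (-⌊R⌋) ⌊R⌋).card : ℝ) ≤ 2 * R + 1 := by
    rw [Int.card_Icc, ← Int.cast_natCast,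
      Int.toNat_of_nonneg (by linarith [Int.floor_nonneg.mpr hR])]
    push_cast
    linarith [Int.floor_le R]
  calc _ ≤ ∑ _k ∈ Finset.Icc (-⌊R⌋) ⌊R⌋, M := Finset.sum_le_sum fun k _ => by
        rw [norm_mul, norm_exp_I_mul_ofReal, mul_one, norm_real, Real.norm_eq_abs]
        exact hM k
    _ ≤ (2 * R + 1) * M := by
        rw [Finset.sum_const, nsmul_eq_mul]
        exact mul_le_mul_of_nonneg_right hcard ((abs_nonneg _).trans (hM 0))

theorem integral_periodicKernel_mul_exp_neg (hsupp : ∀ s, R ≤ |s| → ψ s = 0) (t : ℝ) (k : ℤ) :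
    ∫ y in Set.Ioc 0 (2 * π), periodicKernel ψ t y * exp (-I * ((y * k : ℝ) : ℂ))
      = 2 * π * ψ k * exp (I * ((t * k ^ 2 : ℝ) : ℂ)) := by
  have hterm (k' : ℤ) : ∫ y in Set.Ioc 0 (2 * π),
      (ψ k' : ℂ) * exp (I * ((y * k' + t * k' ^ 2 : ℝ) : ℂ)) * exp (-I * ((y * k : ℝ) : ℂ))
        = if k' = k then 2 * π * ψ k' * exp (I * ((t * k' ^ 2 : ℝ) : ℂ)) else 0 := by
    have hsplit (y : ℝ) : (ψ k' : ℂ) * exp (I * ((y * k' + t * k' ^ 2 : ℝ) : ℂ))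
        * exp (-I * ((y * k : ℝ) : ℂ))
          = ψ k' * exp (I * ((t * k' ^ 2 : ℝ) : ℂ)) * exp (I * ((y * (k' - k : ℤ) : ℝ) : ℂ)) := by
      rw [mul_assoc, mul_assoc, ← Complex.exp_add, ← Complex.exp_add]
      push_cast; ring_nf
    simp_rw [hsplit, MeasureTheory.integral_const_mul, integral_Ioc_exp_I_mul_int, sub_eq_zero]
    split_ifs <;> ring
  simp_rw [periodicKernel_eq_sum hsupp, Finset.sum_mul]
  rw [integral_finsetSum _ fun k' _ => Continuous.integrableOn_Ioc (by fun_prop)]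
  simp_rw [hterm]
  rw [Finset.sum_ite_eq']
  split_ifs with hk
  · rfl
  · rw [hsupp k (le_of_not_gt fun h => hk (int_mem_Icc_floor_of_abs_lt h))]
    simp

end PeriodicKernel

/-! ### The kernel `K_N` on `ℝ³ × 𝕋` -/

theorem stFT3_prod_mul (f g : ℝ → ℝ → ℂ) (ξ : Fin 3 → ℝ) (k : ℤ) (τ : ℝ) :
    stFT3 (fun x y t => (∏ i, f t (x i)) * g t y) ξ k τ
      = ∫ t in Set.Icc (-(2 * π)) (2 * π), exp (-I * ((t * τ : ℝ) : ℂ))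
          * (∫ y in Set.Ioc 0 (2 * π), g t y * exp (-I * ((y * k : ℝ) : ℂ)))
          * ∏ i, ∫ s, f t s * exp (-I * ((s * ξ i : ℝ) : ℂ)) := by
  unfold stFT3
  congr 1 with t
  have hx (y : ℝ) : ∫ x : Fin 3 → ℝ, (∏ i, f t (x i)) * g t y
        * exp (-I * (((∑ i, x i * ξ i) + y * k + t * τ : ℝ) : ℂ))
      = exp (-I * ((t * τ : ℝ) : ℂ)) * (g t y * exp (-I * ((y * k : ℝ) : ℂ)))
          * ∏ i, ∫ s, f t s * exp (-I * ((s * ξ i : ℝ) : ℂ)) := by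
    rw [← integral_fintype_prod_volume_eq_prod
      (f := fun i s => f t s * exp (-I * ((s * ξ i : ℝ) : ℂ))), ← MeasureTheory.integral_const_mul]
    congr 1 with x
    have hphase : exp (-I * (((∑ i, x i * ξ i) + y * k + t * τ : ℝ) : ℂ))
        = exp (-I * ((t * τ : ℝ) : ℂ)) * exp (-I * ((y * k : ℝ) : ℂ))
          * ∏ i, exp (-I * ((x i * ξ i : ℝ) : ℂ)) := by
      rw [← Complex.exp_sum, ← Complex.exp_add, ← Complex.exp_add]
      push_cast
      rw [← Finset.mul_sum]
      ring_nf
    rw [hphase, Finset.prod_mul_distrib]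
    ring
  simp_rw [hx, MeasureTheory.integral_mul_const, MeasureTheory.integral_const_mul]

theorem abs_le_abs_two_pi_mul_add {g t : ℝ} (hg : 2 ≤ |g|) (ht : |t| ≤ 2 * π) :
    |g| ≤ |2 * π * g + t| := by
  have h := abs_sub_abs_le_abs_sub (2 * π * g) (-t)
  rw [sub_neg_eq_add, abs_neg, abs_mul, abs_of_pos Real.two_pi_pos] at h
  nlinarith [Real.pi_gt_three]

theorem KN_eq_prod_freeKernel_mul_periodicKernel (φ1 : ℝ → ℝ) (N : ℝ) (x : Fin 3 → ℝ)
    (y t : ℝ) :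
    KN φ1 N x y t = (∏ i, freeKernel (fun s => φ1 (s / N) ^ 2) t (x i))
      * periodicKernel (fun s => φ1 (s / N) ^ 2) t y := by
  unfold KN
  exact congrArg (· * _) (integral_prod_mul_exp_eq_prod_freeKernel (fun s => φ1 (s / N) ^ 2) t x)

theorem norm_KN_le {φ1 : ℝ → ℝ} {M D N T : ℝ} (hφ : ContDiff ℝ 1 fun u => φ1 u ^ 2)
    (h0 : ∀ u, 2 ≤ |u| → φ1 u = 0) (hM : ∀ u, |φ1 u ^ 2| ≤ M)
    (hD : ∀ u, |deriv (fun u => φ1 u ^ 2) u| ≤ D) (hN : 1 ≤ N) (hT : T ≠ 0)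
    (x : Fin 3 → ℝ) (y : ℝ) : ‖KN φ1 N x y T‖ ≤ (16 * D / √|T|) ^ 3 * (5 * M * N) := by
  have hsupp (u : ℝ) (hu : 2 ≤ |u|) : φ1 u ^ 2 = 0 := by simp [h0 u hu]
  have hN0 : 0 < N := one_pos.trans_le hN
  have hfree (i : Fin 3) : ‖freeKernel (fun s => φ1 (s / N) ^ 2) T (x i)‖ ≤ 16 * D / √|T| := by
    refine (norm_freeKernel_comp_div_le hφ zero_le_two hsupp hD hN0 hT (x i)).trans_eq ?_
    ring
  have hperiodic : ‖periodicKernel (fun s => φ1 (s / N) ^ 2) T y‖ ≤ 5 * M * N := by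
    refine (norm_periodicKernel_le (by positivity) (comp_div_eq_zero_of_le_abs hsupp hN0)
      (fun s => hM _) T y).trans ?_
    nlinarith [(abs_nonneg _).trans (hM 0)]
  rw [KN_eq_prod_freeKernel_mul_periodicKernel, norm_mul, norm_prod]
  have hD0 : 0 ≤ D := (abs_nonneg _).trans (hD 0)
  refine mul_le_mul ?_ hperiodic (norm_nonneg _) (by positivity)
  exact (Finset.prod_le_prod (fun _ _ => norm_nonneg _) fun i _ => hfree i).trans_eq
    (by rw [Finset.prod_const, Finset.card_univ, Fintype.card_fin])

theorem norm_stFT3_KN_le {φ1 : ℝ → ℝ} {M N : ℝ} (hφ : ContDiff ℝ ∞ fun u => φ1 u ^ 2)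
    (h0 : ∀ u, 2 ≤ |u| → φ1 u = 0) (hM : ∀ u, |φ1 u ^ 2| ≤ M) (hN : 0 < N) (T : ℝ → ℝ)
    (ξ : Fin 3 → ℝ) (k : ℤ) (τ : ℝ) :
    ‖stFT3 (fun x y t => KN φ1 N x y (T t)) ξ k τ‖ ≤ (2 * π * M) ^ 4 * (4 * π) := by
  have hsupp : ∀ s, 2 * N ≤ |s| → φ1 (s / N) ^ 2 = 0 :=
    comp_div_eq_zero_of_le_abs (χ := fun u => φ1 u ^ 2) (fun u hu => by simp [h0 u hu]) hN
  have hψ : ContDiff ℝ ∞ fun s => φ1 (s / N) ^ 2 := hφ.comp (contDiff_id.div_const N)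
  have hsymbol (w t : ℝ) : ‖2 * π * (φ1 (w / N) ^ 2 : ℝ) * exp (I * ((t * w ^ 2 : ℝ) : ℂ))‖
      ≤ 2 * π * M := by
    rw [norm_mul, norm_exp_I_mul_ofReal, mul_one, norm_mul, norm_real, Real.norm_eq_abs]
    gcongr
    · simp [abs_of_pos Real.pi_pos]
    · exact hM _
  simp only [KN_eq_prod_freeKernel_mul_periodicKernel]
  rw [stFT3_prod_mul (fun t s => freeKernel _ (T t) s) (fun t y => periodicKernel _ (T t) y)]
  simp_rw [integral_freeKernel_mul_exp_neg hψ (hasCompactSupport_of_eq_zero_of_le_abs hsupp),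
    integral_periodicKernel_mul_exp_neg hsupp]
  refine (norm_setIntegral_le_of_norm_le_const (C := (2 * π * M) ^ 4) (by simp)
    fun t _ => ?_).trans_eq ?_
  · have hphase : ‖exp (-I * ((t * τ : ℝ) : ℂ))‖ = 1 := by simp [norm_exp]
    have hprod : ∏ i, ‖2 * π * (φ1 (ξ i / N) ^ 2 : ℝ) * exp (I * ((T t * ξ i ^ 2 : ℝ) : ℂ))‖
        ≤ (2 * π * M) ^ 3 :=
      (Finset.prod_le_prod (fun _ _ => norm_nonneg _) fun i _ => hsymbol _ _).trans_eq
        (by rw [Finset.prod_const, Finset.card_univ, Fintype.card_fin])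
    have hM0 : 0 ≤ M := (abs_nonneg _).trans (hM 0)
    rw [norm_mul, norm_mul, norm_prod, hphase, one_mul,
      show (2 * π * M) ^ 4 = 2 * π * M * (2 * π * M) ^ 3 by ring]
    exact mul_le_mul (hsymbol _ _) hprod (Finset.prod_nonneg fun _ _ => norm_nonneg _)
      (by positivity)
  · rw [Real.volume_real_Icc, max_eq_left (by linarith [Real.pi_pos])]
    ring

theorem sqrt_pow_three_inv {a : ℝ} (ha : 0 ≤ a) : (√a ^ 3)⁻¹ = a ^ (-(3 : ℝ) / 2) := by
  rw [neg_div, Real.rpow_neg ha, Real.sqrt_eq_rpow, ← Real.rpow_natCast, ← Real.rpow_mul ha]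
  norm_num

theorem kernel_dispersive_bounds_R3T_general (φ1 : ℝ → ℝ) (hs : ContDiff ℝ (⊤ : ℕ∞) φ1)
    (h0 : ∀ x : ℝ, 2 ≤ |x| → φ1 x = 0) :
    ∃ C : ℝ, 0 < C ∧ ∀ (j : ℕ) (γ : ℤ), 3 ≤ |γ| →
      (∀ (x : Fin 3 → ℝ) (y t : ℝ), |t| ≤ 2*Real.pi →
        ‖KN φ1 ((2:ℝ)^j) x y (2*Real.pi*(γ:ℝ) + t)‖ ≤
          C * |(γ:ℝ)| ^ (-(3:ℝ)/2) * (2:ℝ)^j) ∧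
      (∀ (ξ : Fin 3 → ℝ) (k : ℤ) (τ : ℝ),
        ‖stFT3 (fun x y t => KN φ1 ((2:ℝ)^j) x y (2*Real.pi*(γ:ℝ) + t)) ξ k τ‖ ≤ C) := by
  have hχ : ContDiff ℝ ∞ fun u => φ1 u ^ 2 := hs.pow 2
  have hχc : HasCompactSupport fun u => φ1 u ^ 2 :=
    hasCompactSupport_of_eq_zero_of_le_abs (R := 2) fun u hu => by simp [h0 u hu]
  obtain ⟨M, hM0, hM⟩ := exists_pos_abs_le_of_hasCompactSupport hχ.continuous hχc
  obtain ⟨D, hD0, hD⟩ :=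
    exists_pos_abs_le_of_hasCompactSupport (hχ.continuous_deriv (by simp)) hχc.deriv
  refine ⟨max ((16 * D) ^ 3 * (5 * M)) ((2 * π * M) ^ 4 * (4 * π)), by positivity,
    fun j γ hγ => ⟨fun x y t ht => ?_, fun ξ k τ => ?_⟩⟩
  · have hγ2 : 2 ≤ |(γ : ℝ)| := by
      rw [← Int.cast_abs]; exact_mod_cast (show (2 : ℤ) ≤ 3 by norm_num).trans hγ
    have hT := abs_le_abs_two_pi_mul_add hγ2 ht
    have hT0 : 2 * π * γ + t ≠ 0 := fun h => by rw [h, abs_zero] at hT; linarith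
    calc _ ≤ (16 * D / √|2 * π * γ + t|) ^ 3 * (5 * M * 2 ^ j) :=
          norm_KN_le (hχ.of_le (by simp)) h0 hM hD (one_le_pow₀ one_le_two) hT0 x y
      _ ≤ (16 * D / √|(γ : ℝ)|) ^ 3 * (5 * M * 2 ^ j) := by
          gcongr
      _ = (16 * D) ^ 3 * (5 * M) * |(γ : ℝ)| ^ (-(3 : ℝ) / 2) * 2 ^ j := by
          rw [← sqrt_pow_three_inv (abs_nonneg _)]; ring
      _ ≤ _ := by gcongr; exact le_max_left _ _
  · exact (norm_stFT3_KN_le hχ h0 hM (by positivity) _ ξ k τ).trans (le_max_right _ _)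

/-- `L^∞` dispersive bound for the time-translated frequency-localized
Schrödinger kernel `K_{N,γ}(x,y,t) = K_N(x,y,2πγ + t)` on `ℝ³ × 𝕋`: for `|γ| ≥ 3`,
`‖K_{N,γ}‖_{L^∞_{x,y,t}} ≲ |γ|^{-3/2} N`, and `‖F_{x,y,t} K_{N,γ}‖_{L^∞_{ξ,k,τ}} ≲ 1`. -/
theorem kernel_dispersive_bounds_R3T (φ1 : ℝ → ℝ) (hs : ContDiff ℝ (⊤ : ℕ∞) φ1)
    (h1 : ∀ x : ℝ, |x| ≤ 1 → φ1 x = 1) (h0 : ∀ x : ℝ, 2 ≤ |x| → φ1 x = 0) :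
    ∃ C : ℝ, 0 < C ∧ ∀ (j : ℕ) (γ : ℤ), 3 ≤ |γ| →
      (∀ (x : Fin 3 → ℝ) (y t : ℝ), |t| ≤ 2*Real.pi →
        ‖KN φ1 ((2:ℝ)^j) x y (2*Real.pi*(γ:ℝ) + t)‖ ≤
          C * |(γ:ℝ)| ^ (-(3:ℝ)/2) * (2:ℝ)^j) ∧
      (∀ (ξ : Fin 3 → ℝ) (k : ℤ) (τ : ℝ),
        ‖stFT3 (fun x y t => KN φ1 ((2:ℝ)^j) x y (2*Real.pi*(γ:ℝ) + t)) ξ k τ‖ ≤ C) :=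
  kernel_dispersive_bounds_R3T_general φ1 hs h0
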